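/- Let P = {P_k} be a complete family of orthogonal projectors, Δ the block-dephasing map, and define the robustness of block coherence by its dual formulation C_rob(ρ,P) = sup{ Tr(Xρ) − 1 : X positive semidefinite, Δ(X) = I }. Then for every density matrix ρ, the matrix X₁ := I − Δ(ρ) + ρ is positive semidefinite and satisfies Δ(X₁) = I, and consequently C_rob(ρ,P) ≥ −Tr(ρ W_ρ) = Tr(ρ²) − Tr(ρ Δ(ρ)), where W_ρ = Δ(ρ) − ρ. -/

import Mathlib

/-! The dephasing map `Δ` is trace preserving, unital, positive and idempotent. Hence
`Δ(I - Δρ + ρ) = I`, and `I - Δρ + ρ` is positive semidefinite because the density matrix `Δρ`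
lies below `I`. Every feasible `X` of the dual problem has `Tr X = dim` and `Tr(Xρ) ≤ Tr X`
(as `I - ρ ⪰ 0`), so the feasible values are bounded above and the supremum dominates
`Tr((I - Δρ + ρ)ρ) - 1 = Tr(ρ²) - Tr(ρΔρ)`. -/

open Matrix
open scoped ComplexOrder Classical

namespace BlockCoherence

variable {n : Type*} [Fintype n] [DecidableEq n]

/-- Real part of the trace of a complex matrix. -/
noncomputable def retr (A : Matrix n n ℂ) : ℝ := (Matrix.trace A).re

/-- A density matrix: positive semidefinite with trace 1. -/
def IsDensityMatrix (ρ : Matrix n n ℂ) : Prop := ρ.PosSemidef ∧ Matrix.trace ρ = 1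

/-- A complete family of orthogonal projectors. -/
def IsProjFamily {K : Type*} [Fintype K] (P : K → Matrix n n ℂ) : Prop :=
  (∀ k, (P k).IsHermitian) ∧ (∀ k, P k * P k = P k) ∧
    (∀ j k, j ≠ k → P j * P k = 0) ∧ (∑ k, P k = 1)

/-- Block dephasing map Δ(ρ) = Σ_k P_k ρ P_k. -/
noncomputable def deph {K : Type*} [Fintype K] (P : K → Matrix n n ℂ)
    (ρ : Matrix n n ℂ) : Matrix n n ℂ := ∑ k, P k * ρ * P k

/-- Block incoherent (free) states. -/
def IsBlockIncoherent {K : Type*} [Fintype K] (P : K → Matrix n n ℂ)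
    (σ : Matrix n n ℂ) : Prop := IsDensityMatrix σ ∧ σ = deph P σ

/-- A block-incoherent operation presented by its Kraus operators. -/
def IsBIOp {K : Type*} [Fintype K] {N : Type*} [Fintype N]
    (P : K → Matrix n n ℂ) (Kr : N → Matrix n n ℂ) : Prop :=
  (∑ m, (Kr m)ᴴ * Kr m = 1) ∧
    ∀ (m : N) (i j : K), i ≠ j → ∀ σ, IsBlockIncoherent P σ →
      P i * (Kr m * σ * (Kr m)ᴴ) * P j = 0

/-- The channel determined by Kraus operators. -/
noncomputable def krausApply {N : Type*} [Fintype N]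
    (Kr : N → Matrix n n ℂ) (ρ : Matrix n n ℂ) : Matrix n n ℂ :=
  ∑ m, Kr m * ρ * (Kr m)ᴴ

/-- A block coherence measure: conditions (B1)-(B4). -/
structure IsBlockCoherenceMeasure {K : Type*} [Fintype K] (P : K → Matrix n n ℂ)
    (C : Matrix n n ℂ → ℝ) : Prop where
  nonneg : ∀ ρ, IsDensityMatrix ρ → 0 ≤ C ρ
  eq_zero_iff : ∀ ρ, IsDensityMatrix ρ → (C ρ = 0 ↔ IsBlockIncoherent P ρ)
  monotone : ∀ ρ, IsDensityMatrix ρ → ∀ {N : Type} [Fintype N] (Kr : N → Matrix n n ℂ),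
    IsBIOp P Kr → C (krausApply Kr ρ) ≤ C ρ
  strong_monotone : ∀ ρ, IsDensityMatrix ρ → ∀ {N : Type} [Fintype N] (Kr : N → Matrix n n ℂ),
    IsBIOp P Kr →
      ∑ m, (if retr (Kr m * ρ * (Kr m)ᴴ) = 0 then (0 : ℝ) else
        retr (Kr m * ρ * (Kr m)ᴴ) *
          C ((retr (Kr m * ρ * (Kr m)ᴴ))⁻¹ • (Kr m * ρ * (Kr m)ᴴ))) ≤ C ρ
  convex : ∀ {N : Type} [Fintype N] (p : N → ℝ) (ρs : N → Matrix n n ℂ),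
    (∀ m, 0 ≤ p m) → ∑ m, p m = 1 → (∀ m, IsDensityMatrix (ρs m)) →
      C (∑ m, p m • ρs m) ≤ ∑ m, p m * C (ρs m)

/-- Real power of a matrix via the spectral functional calculus (0 on non-Hermitian input). -/
noncomputable def mpow (A : Matrix n n ℂ) (t : ℝ) : Matrix n n ℂ :=
  if hA : A.IsHermitian then
    (hA.eigenvectorUnitary : Matrix n n ℂ) *
      Matrix.diagonal (fun i => ((hA.eigenvalues i ^ t : ℝ) : ℂ)) *
      (star (hA.eigenvectorUnitary : Matrix n n ℂ))
  else 0

/-- Positive semidefinite square root (0 on non-PSD input). -/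
noncomputable def msqrt (A : Matrix n n ℂ) : Matrix n n ℂ :=
  if hA : A.PosSemidef then
    (hA.1.eigenvectorUnitary : Matrix n n ℂ) *
      Matrix.diagonal ((↑) ∘ (Real.sqrt ·) ∘ hA.1.eigenvalues) *
      (star (hA.1.eigenvectorUnitary : Matrix n n ℂ))
  else 0

/-- Base-2 matrix logarithm via spectral calculus, with the convention log 0 = 0. -/
noncomputable def mlog2 (A : Matrix n n ℂ) : Matrix n n ℂ :=
  if hA : A.IsHermitian then
    (hA.eigenvectorUnitary : Matrix n n ℂ) *
      Matrix.diagonal (fun i => ((Real.logb 2 (hA.eigenvalues i) : ℝ) : ℂ)) *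
      (star (hA.eigenvectorUnitary : Matrix n n ℂ))
  else 0

/-- Trace norm ‖M‖_Tr = Tr √(MᴴM). -/
noncomputable def trNorm (M : Matrix n n ℂ) : ℝ :=
  retr (msqrt (Mᴴ * M))

/-- The α-z Rényi block coherence measure
`C_{α,z}(ρ,P) = 1 - (max_{σ∈I_B} Tr[(σ^{(1-α)/(2z)} ρ^{α/z} σ^{(1-α)/(2z)})^z])^{1/α}`. -/
noncomputable def Caz {K : Type*} [Fintype K] (α z : ℝ) (P : K → Matrix n n ℂ)
    (ρ : Matrix n n ℂ) : ℝ :=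
  1 - (sSup {x : ℝ | ∃ σ, IsBlockIncoherent P σ ∧
    x = retr (mpow (mpow σ ((1 - α) / (2 * z)) * mpow ρ (α / z) *
      mpow σ ((1 - α) / (2 * z))) z)}) ^ (1 / α)


/-- Robustness of block coherence, dual (SDP) formulation:
`C_rob(ρ,P) = sup { Tr(Xρ) - 1 : X ⪰ 0, Δ(X) = I }`. -/
noncomputable def CrobDual {K : Type*} [Fintype K] (P : K → Matrix n n ℂ)
    (ρ : Matrix n n ℂ) : ℝ :=
  sSup {x : ℝ | ∃ X : Matrix n n ℂ, X.PosSemidef ∧ deph P X = 1 ∧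
    x = retr (X * ρ) - 1}

lemma _root_.Matrix.PosSemidef.trace_mul_nonneg {m 𝕜 : Type*} [Fintype m] [RCLike 𝕜]
    {A B : Matrix m m 𝕜} (hA : A.PosSemidef) (hB : B.PosSemidef) : 0 ≤ (A * B).trace := by
  open scoped MatrixOrder in
  set S := CFC.sqrt B
  have hS : S.IsHermitian := (CFC.sqrt_nonneg B).posSemidef.isHermitian
  have hSS : S * S = B := CFC.sqrt_mul_sqrt_self B hB.nonneg
  calc 0 ≤ (Sᴴ * A * S).trace := (hA.conjTranspose_mul_mul_same S).trace_nonneg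
    _ = (A * B).trace := by rw [hS.eq, trace_mul_cycle, hSS, trace_mul_comm]

/-- Every eigenvalue of a positive semidefinite matrix is at most the sum of all of them. -/
lemma _root_.Matrix.PosSemidef.posSemidef_trace_smul_one_sub {𝕜 : Type*} [RCLike 𝕜]
    {A : Matrix n n 𝕜} (hA : A.PosSemidef) : (A.trace • 1 - A).PosSemidef := by
  open scoped MatrixOrder in
  have hle : ∀ x ∈ spectrum ℝ A, x ≤ ∑ i, hA.isHermitian.eigenvalues i := by
    rintro x hx
    obtain ⟨i, rfl⟩ := hA.isHermitian.spectrum_real_eq_range_eigenvalues ▸ hx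
    exact Finset.single_le_sum (fun j _ => hA.eigenvalues_nonneg j) (Finset.mem_univ i)
  have htr : A.trace = ((∑ i, hA.isHermitian.eigenvalues i : ℝ) : 𝕜) := by
    rw [hA.isHermitian.trace_eq_sum_eigenvalues, RCLike.ofReal_sum]
  rw [htr, ← RCLike.real_smul_eq_coe_smul, ← Algebra.algebraMap_eq_smul_one]
  exact le_algebraMap_of_spectrum_le hle hA.isHermitian.isSelfAdjoint

lemma IsDensityMatrix.posSemidef_one_sub {ρ : Matrix n n ℂ} (hρ : IsDensityMatrix ρ) :
    (1 - ρ).PosSemidef := by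
  simpa [hρ.2] using hρ.1.posSemidef_trace_smul_one_sub

lemma retr_add {m : Type*} [Fintype m] (A B : Matrix m m ℂ) :
    retr (A + B) = retr A + retr B := by
  simp [retr, trace_add]

lemma retr_sub {m : Type*} [Fintype m] (A B : Matrix m m ℂ) :
    retr (A - B) = retr A - retr B := by
  simp [retr, trace_sub]

lemma retr_mul_le_retr {X ρ : Matrix n n ℂ} (hX : X.PosSemidef) (hρ : (1 - ρ).PosSemidef) :
    retr (X * ρ) ≤ retr X := by
  have h := (Complex.nonneg_iff.mp (hX.trace_mul_nonneg hρ)).1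
  rw [← retr, mul_sub, mul_one, retr_sub] at h
  linarith

section deph

variable {m K : Type*} [Fintype m] [Fintype K]

lemma deph_add (P : K → Matrix m m ℂ) (A B : Matrix m m ℂ) :
    deph P (A + B) = deph P A + deph P B := by
  simp only [deph, mul_add, add_mul, Finset.sum_add_distrib]

lemma deph_sub (P : K → Matrix m m ℂ) (A B : Matrix m m ℂ) :
    deph P (A - B) = deph P A - deph P B := by
  simp only [deph, mul_sub, sub_mul, Finset.sum_sub_distrib]

end deph

namespace IsProjFamily

variable {K : Type*} [Fintype K] {P : K → Matrix n n ℂ}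

lemma deph_one (hP : IsProjFamily P) : deph P 1 = 1 := by
  simp only [deph, mul_one, hP.2.1, hP.2.2.2]

lemma trace_deph (hP : IsProjFamily P) (X : Matrix n n ℂ) : (deph P X).trace = X.trace := by
  simp only [deph, trace_sum]
  calc ∑ k, (P k * X * P k).trace = ∑ k, (P k * X).trace := by
        simp only [trace_mul_cycle _ X, hP.2.1]
    _ = X.trace := by rw [← trace_sum, ← Finset.sum_mul, hP.2.2.2, one_mul]

lemma deph_posSemidef (hP : IsProjFamily P) {X : Matrix n n ℂ} (hX : X.PosSemidef) :
    (deph P X).PosSemidef :=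
  Matrix.posSemidef_sum _ fun k _ => by
    simpa only [(hP.1 k).eq] using hX.conjTranspose_mul_mul_same (P k)

lemma mul_deph_mul (hP : IsProjFamily P) (k : K) (X : Matrix n n ℂ) :
    P k * deph P X * P k = P k * X * P k := by
  rw [deph, Finset.mul_sum, Finset.sum_mul, Finset.sum_eq_single k]
  · simp only [← mul_assoc, hP.2.1 k]
    rw [mul_assoc _ (P k) (P k), hP.2.1 k]
  · intro j _ hjk
    calc P k * (P j * X * P j) * P k = P k * P j * X * (P j * P k) := by simp only [mul_assoc]
      _ = 0 := by rw [hP.2.2.1 k j hjk.symm, zero_mul, zero_mul]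
  · simp

lemma deph_deph (hP : IsProjFamily P) (X : Matrix n n ℂ) : deph P (deph P X) = deph P X :=
  Finset.sum_congr rfl fun k _ => hP.mul_deph_mul k X

end IsProjFamily

lemma le_CrobDual {K : Type*} [Fintype K] {P : K → Matrix n n ℂ} (hP : IsProjFamily P)
    {ρ X : Matrix n n ℂ} (hρ : (1 - ρ).PosSemidef) (hX : X.PosSemidef) (hXP : deph P X = 1) :
    retr (X * ρ) - 1 ≤ CrobDual P ρ := by
  refine le_csSup ⟨Fintype.card n - 1, ?_⟩ ⟨X, hX, hXP, rfl⟩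
  rintro _ ⟨Y, hY, hYP, rfl⟩
  have hY_retr : retr Y = Fintype.card n := by
    rw [retr, ← hP.trace_deph, hYP, trace_one, Complex.natCast_re]
  linarith [retr_mul_le_retr hY hρ]

/-- `X₁ = I - Δ(ρ) + ρ` is a feasible point of the dual SDP, and
hence `C_rob(ρ,P) ≥ -Tr(ρ W_ρ) = Tr(ρ²) - Tr(ρ Δ(ρ))`. -/
theorem CrobDual_lower_bound
    {K : Type*} [Fintype K]
    (P : K → Matrix n n ℂ) (hP : IsProjFamily P)
    (ρ : Matrix n n ℂ) (hρ : IsDensityMatrix ρ) :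
    (1 - deph P ρ + ρ).PosSemidef ∧ deph P (1 - deph P ρ + ρ) = 1 ∧
      retr (ρ * ρ) - retr (ρ * deph P ρ) ≤ CrobDual P ρ := by
  have hΔρ : IsDensityMatrix (deph P ρ) :=
    ⟨hP.deph_posSemidef hρ.1, by rw [hP.trace_deph, hρ.2]⟩
  have hX₁ : (1 - deph P ρ + ρ).PosSemidef := hΔρ.posSemidef_one_sub.add hρ.1
  have hX₁P : deph P (1 - deph P ρ + ρ) = 1 := by
    rw [deph_add, deph_sub, hP.deph_one, hP.deph_deph, sub_add_cancel]
  refine ⟨hX₁, hX₁P, ?_⟩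
  have hvalue : retr ((1 - deph P ρ + ρ) * ρ) - 1 = retr (ρ * ρ) - retr (ρ * deph P ρ) := by
    have hρ_retr : retr ρ = 1 := by rw [retr, hρ.2, Complex.one_re]
    rw [add_mul, sub_mul, one_mul, retr_add, retr_sub, hρ_retr, retr, trace_mul_comm, ← retr]
    ring
  exact hvalue ▸ le_CrobDual hP hρ.posSemidef_one_sub hX₁ hX₁P

end BlockCoherence
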